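/- Let G be a 2-generated group containing a normal, non-abelian maximal subgroup M with Z(G) properly contained in Z(M), and let x ∈ M \ Z(M) and y ∈ G \ M. Then x and y lie in distinct connected components of the non-commuting, non-generating graph nc(G) if and only if K ∩ M = Z(M) for every maximal subgroup K of G distinct from M; and if x and y lie in the same connected component of nc(G), then the distance d(x,y) in nc(G) is at most 4. -/

import Mathlib

open Subgroup

namespace NC

variable {G : Type*} [Group G]

/-- The centre of a subgroup `H`, realised as a subgroup of the ambient group `G`. -/
def centerOf (H : Subgroup G) : Subgroup G := H ⊓ Subgroup.centralizer (H : Set G)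

/-- `H` is a maximal subgroup of `K` (both subgroups of the ambient group `G`). -/
def IsMaximalIn (H K : Subgroup G) : Prop :=
  H < K ∧ ∀ T : Subgroup G, H < T → T ≤ K → T = K

/-- The non-commuting, non-generating graph of `G`: vertices `x, y` are adjacent
iff they do not commute and do not generate `G`.  (Central elements are isolated
vertices here; the paper simply removes them from the vertex set.) -/
def ncGraph (G : Type*) [Group G] : SimpleGraph G where
  Adj x y := x * y ≠ y * x ∧ Subgroup.closure {x, y} ≠ ⊤
  symm := by
    constructor
    intro x y h
    exact ⟨fun e => h.1 e.symm, by rw [Set.pair_comm]; exact h.2⟩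
  loopless := by
    constructor
    intro x h
    exact h.1 rfl

/-- The conjugate `g H g⁻¹` of a subgroup `H` by an element `g`. -/
def conjSub (g : G) (H : Subgroup G) : Subgroup G := H.map (MulAut.conj g).toMonoidHom

/-- "The quotient of `G` by the subgroup `H` is cyclic": every coset of `H` is a
power of a fixed coset.  For `H` normal this says exactly that `G/H` is cyclic. -/
def QuotCyclic (H : Subgroup G) : Prop := ∃ g : G, ∀ x : G, ∃ n : ℤ, x⁻¹ * g ^ n ∈ H

/-- `P` is a Sylow `p`-subgroup of `G`. -/
def IsSylowIn (p : ℕ) (P : Subgroup G) : Prop :=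
  IsPGroup p P ∧ ∀ R : Subgroup G, IsPGroup p R → P ≤ R → R = P

/-- The Frattini subgroup of a subgroup `P` (the intersection of the maximal
subgroups of `P`), realised as a subgroup of the ambient group. -/
def phiIn (P : Subgroup G) : Subgroup G := P ⊓ sInf {W : Subgroup G | IsMaximalIn W P}

/-- `G` has exactly two conjugacy classes of maximal subgroups. -/
def TwoMaxClasses (G : Type*) [Group G] : Prop :=
  ∃ K L : Subgroup G, IsCoatom K ∧ IsCoatom L ∧ (∀ g : G, conjSub g K ≠ L) ∧
    ∀ T : Subgroup G, IsCoatom T → (∃ g : G, T = conjSub g K) ∨ (∃ g : G, T = conjSub g L)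

/-- The induced subgraph of the non-commuting, non-generating graph on the
actual vertex set `G \ Z(G)`. -/
def ncSubgraph (G : Type*) [Group G] := (ncGraph G).induce {x : G | x ∉ Subgroup.center G}

/-!
An element `c ∈ Z(M) \ Z(G)` has centraliser exactly `M`, and `⟨c, w⟩ ≤ Z(M)⟨w⟩` is proper
because `M` is non-abelian, so `c` is adjacent to every vertex outside `M`; two vertices of
`M \ Z(M)` are at distance at most 2. An edge `u — v` lies in some maximal subgroup `L`, so if
every maximal `K ≠ M` meets `M` in `Z(M)`, no edge leaves `M \ Z(M)`.

Otherwise, either `y` has a neighbour in `M \ Z(M)` (distance ≤ 3), or some edge `v — w` with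
`v ∈ M \ C(x)`, `w ∉ M` gives the path `x — v — w — c — y`. If neither happens, every maximal
`L ≠ M` satisfies `L ∩ M ≤ C(x)`: otherwise `L` would be the centraliser of some `u ∈ L ∩ M`,
and then `uc` and `w ∈ L \ M` would be such an edge. This forces `Z(M) ≤ K`, so `K ∩ M` contains
an element `u ∉ Z(M)` not commuting with `y`; `u` and `y` generate `G`, and the modular law
gives `M = ⟨u^G⟩ (⟨y⟩ ∩ M) ≤ C(x)`, i.e. `x ∈ Z(M)`.
-/

section GroupTheory

variable {M L : Subgroup G}

theorem commute_mul_left_iff_of_commute {a b c : G} (hb : Commute b c) :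
    Commute (a * b) c ↔ Commute a c := by
  simp only [commute_iff_eq, ← mem_centralizer_singleton_iff] at hb ⊢
  exact mul_mem_cancel_right hb

theorem commute_mul_left_iff_of_commute' {a b c : G} (ha : Commute a c) :
    Commute (a * b) c ↔ Commute b c := by
  simp only [commute_iff_eq, ← mem_centralizer_singleton_iff] at ha ⊢
  exact mul_mem_cancel_left ha

theorem isCoatomic_of_closure_pair_eq_top {a b : G} (h : closure {a, b} = ⊤) :
    IsCoatomic (Subgroup G) := by
  refine CompleteLattice.coatomic_of_top_compact <|
    (CompleteLattice.isCompactElement_iff_le_of_directed_sSup_le _ ⊤).2 fun s hs hdir htop => ?_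
  have hmem (g : G) : ∃ H ∈ s, g ∈ H := (mem_sSup_of_directedOn hs hdir).1 (htop (mem_top g))
  obtain ⟨A, hA, ha⟩ := hmem a
  obtain ⟨B, hB, hb⟩ := hmem b
  obtain ⟨C, hC, hAC, hBC⟩ := hdir A hA B hB
  refine ⟨C, hC, ?_⟩
  rw [← h, closure_le]
  exact Set.pair_subset (hAC ha) (hBC hb)

theorem sup_inf_assoc_of_normal_le {N : Subgroup G} [N.Normal] (h : N ≤ M) :
    (N ⊔ L) ⊓ M = N ⊔ L ⊓ M :=
  SetLike.coe_injective <| by rw [coe_inf, normal_mul, normal_mul, mul_inf_assoc _ _ _ h]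

theorem le_closure_diff_of_not_le (h : ¬L ≤ M) : L ≤ closure ((L : Set G) \ M) := by
  obtain ⟨w, hwL, hwM⟩ := SetLike.not_le_iff_exists.1 h
  intro l hl
  by_cases hlM : l ∈ M
  · have hlw : l * w ∈ (L : Set G) \ M :=
      ⟨mul_mem hl hwL, fun h => hwM ((mul_mem_cancel_left hlM).1 h)⟩
    simpa using mul_mem (subset_closure hlw) (inv_mem (subset_closure ⟨hwL, hwM⟩))
  · exact subset_closure ⟨hl, hlM⟩

end GroupTheory

section CenterOf

variable {M : Subgroup G}

theorem centerOf_le : centerOf M ≤ M := inf_le_left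

theorem centerOf_le_centralizer : centerOf M ≤ centralizer M := inf_le_right

instance centerOf_normal [M.Normal] : (centerOf M).Normal := by
  unfold centerOf
  infer_instance

theorem commute_of_mem_centerOf {z m : G} (hz : z ∈ centerOf M) (hm : m ∈ M) : Commute m z :=
  hz.2 m hm

theorem centerOf_le_centralizer_singleton {x : G} (hx : x ∈ M) :
    centerOf M ≤ centralizer {x} := fun _ hz =>
  mem_centralizer_singleton_iff.2 (commute_of_mem_centerOf hz hx).symm

theorem mem_centerOf_of_sup_eq_top {N L : Subgroup G} [N.Normal] {x : G} (hNM : N ≤ M)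
    (hNL : N ⊔ L = ⊤) (hx : x ∈ M) (hN : N ≤ centralizer {x}) (hL : L ⊓ M ≤ centralizer {x}) :
    x ∈ centerOf M := by
  have hM : M ≤ centralizer {x} :=
    calc M = (N ⊔ L) ⊓ M := by rw [hNL, top_inf_eq]
      _ = N ⊔ L ⊓ M := sup_inf_assoc_of_normal_le hNM
      _ ≤ centralizer {x} := sup_le hN hL
  exact ⟨hx, fun m hm => mem_centralizer_singleton_iff.1 (hM hm)⟩

theorem centerOf_ne_of_mem_of_not_mem {x : G} (hx : x ∈ M) (hxZ : x ∉ centerOf M) :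
    centerOf M ≠ M := fun h => hxZ (by rwa [h])

theorem centralizer_singleton_eq_of_mem_centerOf (hM : IsCoatom M) {c : G}
    (hc : c ∈ centerOf M) (hcZ : c ∉ center G) : centralizer {c} = M := by
  have hle : M ≤ centralizer {c} := fun m hm =>
    mem_centralizer_singleton_iff.2 (commute_of_mem_centerOf hc hm)
  exact (hM.le_iff.1 hle).resolve_left fun htop =>
    hcZ (centralizer_eq_top_iff_subset.1 htop (Set.mem_singleton c))

theorem not_commute_of_mem_centerOf (hM : IsCoatom M) {c w : G} (hc : c ∈ centerOf M)
    (hcZ : c ∉ center G) (hw : w ∉ M) : ¬Commute c w := fun h =>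
  hw (centralizer_singleton_eq_of_mem_centerOf hM hc hcZ ▸ mem_centralizer_singleton_iff.2 h.symm)

theorem centerOf_sup_zpowers_ne_top [M.Normal] (hMab : centerOf M ≠ M) (g : G) :
    centerOf M ⊔ zpowers g ≠ ⊤ := by
  intro htop
  -- `M = Z(M) A` with `A` cyclic, so `M` would be abelian
  set A := zpowers g ⊓ M
  have hA : A ≤ centralizer A := inf_le_left.trans
    ((le_centralizer_iff_isMulCommutative.2 inferInstance).trans (centralizer_le inf_le_left))
  have hMA : M ≤ centerOf M ⊔ A := by
    rw [← sup_inf_assoc_of_normal_le centerOf_le, htop, top_inf_eq]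
  have hAM : A ≤ centralizer M := le_centralizer_iff.1 <|
    hMA.trans (sup_le (centerOf_le_centralizer.trans (centralizer_le inf_le_right)) hA)
  exact hMab <| le_antisymm centerOf_le <|
    le_inf le_rfl (hMA.trans (sup_le centerOf_le_centralizer hAM))

end CenterOf

section Graph

variable {M : Subgroup G}

theorem ncGraph_adj_of_mem {L : Subgroup G} (hL : L ≠ ⊤) {u v : G} (hu : u ∈ L) (hv : v ∈ L)
    (h : ¬Commute u v) : (ncGraph G).Adj u v :=
  ⟨h, ne_top_of_le_ne_top hL ((closure_le _).2 (Set.pair_subset hu hv))⟩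

theorem exists_isCoatom_of_ncGraph_adj [IsCoatomic (Subgroup G)] {u v : G}
    (h : (ncGraph G).Adj u v) : ∃ L : Subgroup G, IsCoatom L ∧ u ∈ L ∧ v ∈ L := by
  obtain ⟨L, hL, hle⟩ := (eq_top_or_exists_le_coatom _).resolve_left h.2
  exact ⟨L, hL, hle (subset_closure (Set.mem_insert _ _)),
    hle (subset_closure (Set.mem_insert_of_mem _ rfl))⟩

theorem ncGraph_adj_of_mem_centerOf (hM : IsCoatom M) [M.Normal] (hMab : centerOf M ≠ M)
    {c w : G} (hc : c ∈ centerOf M) (hcZ : c ∉ center G) (hw : w ∉ M) : (ncGraph G).Adj c w :=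
  ncGraph_adj_of_mem (centerOf_sup_zpowers_ne_top hMab w) (mem_sup_left hc)
    (mem_sup_right (mem_zpowers w)) (not_commute_of_mem_centerOf hM hc hcZ hw)

theorem exists_walk_length_le_two (hM : M ≠ ⊤) {u v : G} (hu : u ∈ M) (huZ : u ∉ centerOf M)
    (hv : v ∈ M) (hvZ : v ∉ centerOf M) : ∃ p : (ncGraph G).Walk u v, p.length ≤ 2 := by
  by_cases huv : ¬Commute u v
  · exact ⟨(ncGraph_adj_of_mem hM hu hv huv).toWalk, by simp⟩
  have exists_not_commute {z : G} (hz : z ∈ M) (hzZ : z ∉ centerOf M) : ∃ a ∈ M, ¬Commute a z := by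
    by_contra! h
    exact hzZ ⟨hz, h⟩
  have path {m : G} (hm : m ∈ M) (hum : ¬Commute u m) (hmv : ¬Commute m v) :
      ∃ p : (ncGraph G).Walk u v, p.length ≤ 2 :=
    ⟨.cons (ncGraph_adj_of_mem hM hu hm hum) (ncGraph_adj_of_mem hM hm hv hmv).toWalk, by simp⟩
  obtain ⟨a, ha, hau⟩ := exists_not_commute hu huZ
  obtain ⟨b, hb, hbv⟩ := exists_not_commute hv hvZ
  by_cases hav : Commute a v
  · by_cases hbu : Commute b u
    · exact path (mul_mem ha hb) (fun h => hau ((commute_mul_left_iff_of_commute hbu).1 h.symm))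
        (fun h => hbv ((commute_mul_left_iff_of_commute' hav).1 h))
    · exact path hb (fun h => hbu h.symm) hbv
  · exact path ha (fun h => hau h.symm) hav

theorem mem_of_ncGraph_reachable [IsCoatomic (Subgroup G)]
    (hC : ∀ K : Subgroup G, IsCoatom K → K ≠ M → K ⊓ M ≤ centerOf M) {u v : G}
    (h : (ncGraph G).Reachable u v) (hu : u ∈ M) (huZ : u ∉ centerOf M) :
    v ∈ M ∧ v ∉ centerOf M := by
  obtain ⟨p⟩ := h
  induction p with
  | nil => exact ⟨hu, huZ⟩
  | @cons u w v hadj _ ih =>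
    obtain ⟨L, hL, huL, hwL⟩ := exists_isCoatom_of_ncGraph_adj hadj
    have hwM : w ∈ M := by
      by_contra hwM
      exact huZ (hC L hL (fun hLM => hwM (hLM ▸ hwL)) ⟨huL, hu⟩)
    exact ih hwM fun hwZ => hadj.1 (commute_of_mem_centerOf hwZ hu)

end Graph

section ShortPath

variable {M : Subgroup G}

theorem inf_le_centralizer_of_forall_adj_commute (hM : IsCoatom M) {c x : G}
    (hc : c ∈ centerOf M) (hcZ : c ∉ center G) (hx : x ∈ M)
    (hcross : ∀ v ∈ M, ∀ w ∉ M, (ncGraph G).Adj v w → Commute v x)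
    {L : Subgroup G} (hL : IsCoatom L) (hLM : L ≠ M) : L ⊓ M ≤ centralizer {x} := by
  rintro u ⟨huL, huM⟩
  rw [mem_centralizer_singleton_iff]
  by_contra hux
  have hLnM : ¬L ≤ M := fun hle => hLM ((hL.le_iff.1 hle).resolve_left hM.1).symm
  have huw : ∀ w ∈ L, w ∉ M → Commute u w := fun w hwL hwM => by_contra fun h =>
    hux (hcross u huM w hwM (ncGraph_adj_of_mem hL.1 huL hwL h))
  -- `L` is generated by `L \ M`, so it centralises `u`, and maximality makes it the centraliser
  have hLu : L = centralizer {u} := by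
    refine ((hL.le_iff.1 ?_).resolve_left fun htop => hux ?_).symm
    · exact (le_closure_diff_of_not_le hLnM).trans <| (closure_le _).2 fun w ⟨hwL, hwM⟩ =>
        mem_centralizer_singleton_iff.2 (huw w hwL hwM).symm
    · exact (mem_centralizer_singleton_iff.1 (htop ▸ mem_top x)).symm
  obtain ⟨w, hwL, hwM⟩ := SetLike.not_le_iff_exists.1 hLnM
  have hcL : c ∈ L :=
    hLu ▸ mem_centralizer_singleton_iff.2 (commute_of_mem_centerOf hc huM).symm
  have hucw : ¬Commute (u * c) w := fun h => not_commute_of_mem_centerOf hM hc hcZ hwM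
    ((commute_mul_left_iff_of_commute' (huw w hwL hwM)).1 h)
  have hucx := hcross _ (mul_mem huM hc.1) w hwM
    (ncGraph_adj_of_mem hL.1 (mul_mem huL hcL) hwL hucw)
  exact hux ((commute_mul_left_iff_of_commute (commute_of_mem_centerOf hc hx).symm).1 hucx)

theorem centerOf_le_of_inf_le_centralizer [M.Normal] {x : G} (hx : x ∈ M)
    (hxZ : x ∉ centerOf M) {L : Subgroup G} (hL : IsCoatom L) (hLx : L ⊓ M ≤ centralizer {x}) :
    centerOf M ≤ L := by
  by_contra hZL
  refine hxZ <|
    mem_centerOf_of_sup_eq_top centerOf_le ?_ hx (centerOf_le_centralizer_singleton hx) hLx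
  exact (hL.le_iff.1 le_sup_right).resolve_right fun h => hZL (h ▸ le_sup_left)

theorem normalClosure_le_centralizer [M.Normal] {x u : G}
    (hLx : ∀ L : Subgroup G, IsCoatom L → L ≠ M → L ⊓ M ≤ centralizer {x})
    {K : Subgroup G} (hK : IsCoatom K) (hKM : K ≠ M) (hu : u ∈ K ⊓ M) :
    normalClosure {u} ≤ centralizer {x} := by
  refine (closure_le _).2 fun v hv => ?_
  obtain ⟨_, hb, hconj⟩ := Group.mem_conjugatesOfSet_iff.1 hv
  obtain ⟨g, rfl⟩ := isConj_iff.1 (Set.mem_singleton_iff.1 hb ▸ hconj)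
  have hgK : IsCoatom (K.map (MulAut.conj g : G →* G)) :=
    ((MulAut.conj g).mapSubgroup.isCoatom_iff K).2 hK
  have hgKM : K.map (MulAut.conj g : G →* G) ≠ M := fun h => hKM <|
    map_injective (MulAut.conj g).injective (h.trans (Normal.map_conj_eq M g).symm)
  refine hLx _ hgK hgKM ⟨?_, Normal.conj_mem inferInstance u hu.2 g⟩
  simpa using mem_map_of_mem (MulAut.conj g : G →* G) hu.1

theorem mem_centerOf_of_closure_eq_top [IsCoatomic (Subgroup G)] [M.Normal]
    (hMab : centerOf M ≠ M) {x u y : G} (hx : x ∈ M) (hy : y ∉ M)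
    (hLx : ∀ L : Subgroup G, IsCoatom L → L ≠ M → L ⊓ M ≤ centralizer {x})
    {K : Subgroup G} (hK : IsCoatom K) (hKM : K ≠ M) (hu : u ∈ K ⊓ M)
    (hgen : closure {u, y} = ⊤) : x ∈ centerOf M := by
  obtain ⟨L, hL, hyL⟩ := (eq_top_or_exists_le_coatom (zpowers y)).resolve_left
    (ne_top_of_le_ne_top (centerOf_sup_zpowers_ne_top hMab y) le_sup_right)
  have hLM : L ≠ M := fun h => hy (h ▸ hyL (mem_zpowers y))
  refine mem_centerOf_of_sup_eq_top (normalClosure_le_normal (Set.singleton_subset_iff.2 hu.2))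
    ?_ hx (normalClosure_le_centralizer hLx hK hKM hu)
    ((inf_le_inf_right M hyL).trans (hLx L hL hLM))
  rw [eq_top_iff, ← hgen, closure_le]
  exact Set.pair_subset (mem_sup_left (subset_normalClosure rfl)) (mem_sup_right (mem_zpowers y))

theorem inf_eq_centerOf_of_forall_not_adj [IsCoatomic (Subgroup G)] (hM : IsCoatom M) [M.Normal]
    {c x y : G} (hc : c ∈ centerOf M) (hcZ : c ∉ center G)
    (hx : x ∈ M) (hxZ : x ∉ centerOf M) (hy : y ∉ M)
    (hyadj : ∀ v ∈ M, v ∉ centerOf M → ¬(ncGraph G).Adj v y)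
    (hcross : ∀ v ∈ M, ∀ w ∉ M, (ncGraph G).Adj v w → Commute v x)
    {K : Subgroup G} (hK : IsCoatom K) (hKM : K ≠ M) : K ⊓ M = centerOf M := by
  have hLx := fun L (hL : IsCoatom L) =>
    inf_le_centralizer_of_forall_adj_commute hM hc hcZ hx hcross hL
  have hZK : centerOf M ≤ K := centerOf_le_of_inf_le_centralizer hx hxZ hK (hLx K hK hKM)
  refine le_antisymm (fun u hu => by_contra fun huZ => hxZ ?_) (le_inf hZK centerOf_le)
  obtain ⟨u, hu, huZ, huy⟩ : ∃ u ∈ K ⊓ M, u ∉ centerOf M ∧ ¬Commute u y := by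
    by_cases huy : Commute u y
    · refine ⟨u * c, mul_mem hu ⟨hZK hc, hc.1⟩, fun h => huZ ((mul_mem_cancel_right hc).1 h),
        fun h => not_commute_of_mem_centerOf hM hc hcZ hy ?_⟩
      exact (commute_mul_left_iff_of_commute' huy).1 h
    · exact ⟨u, hu, huZ, huy⟩
  have hgen : closure {u, y} = ⊤ := by_contra fun h => hyadj u hu.2 huZ ⟨huy, h⟩
  exact mem_centerOf_of_closure_eq_top (centerOf_ne_of_mem_of_not_mem hx hxZ) hx hy hLx hK hKM hu hgen

theorem exists_walk_length_le_four [IsCoatomic (Subgroup G)] (hM : IsCoatom M) [M.Normal]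
    (hZ : center G < centerOf M) {x y : G} (hx : x ∈ M) (hxZ : x ∉ centerOf M) (hy : y ∉ M)
    {K : Subgroup G} (hK : IsCoatom K) (hKM : K ≠ M) (hKZ : K ⊓ M ≠ centerOf M) :
    ∃ p : (ncGraph G).Walk x y, p.length ≤ 4 := by
  obtain ⟨c, hc, hcZ⟩ := SetLike.exists_of_lt hZ
  by_cases hyadj : ∃ v ∈ M, v ∉ centerOf M ∧ (ncGraph G).Adj v y
  · obtain ⟨v, hv, hvZ, hvy⟩ := hyadj
    obtain ⟨p, hp⟩ := exists_walk_length_le_two hM.1 hx hxZ hv hvZ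
    exact ⟨p.concat hvy, by rw [SimpleGraph.Walk.length_concat]; omega⟩
  by_cases hcross : ∃ v ∈ M, ∃ w ∉ M, (ncGraph G).Adj v w ∧ ¬Commute v x
  · obtain ⟨v, hv, w, hw, hvw, hvx⟩ := hcross
    have hcadj {w : G} (hw : w ∉ M) :=
      ncGraph_adj_of_mem_centerOf hM (centerOf_ne_of_mem_of_not_mem hx hxZ) hc hcZ hw
    exact ⟨.cons (ncGraph_adj_of_mem hM.1 hx hv fun h => hvx h.symm)
      (.cons hvw (.cons (hcadj hw).symm (hcadj hy).toWalk)), by simp⟩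
  push Not at hyadj hcross
  exact absurd (inf_eq_centerOf_of_forall_not_adj hM hc hcZ hx hxZ hy hyadj hcross hK hKM) hKZ

end ShortPath

theorem statement_17_general (h2gen : ∃ a b : G, Subgroup.closure {a, b} = ⊤)
    {M : Subgroup G} (hM : IsCoatom M) (hMn : M.Normal)
    (hZ : Subgroup.center G < centerOf M)
    {x y : G} (hx : x ∈ M) (hxZ : x ∉ centerOf M) (hy : y ∉ M) :
    (¬ (ncGraph G).Reachable x y ↔
        ∀ K : Subgroup G, IsCoatom K → K ≠ M → K ⊓ M = centerOf M) ∧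
      ((ncGraph G).Reachable x y → (ncGraph G).dist x y ≤ 4) := by
  obtain ⟨a, b, hab⟩ := h2gen
  have := isCoatomic_of_closure_pair_eq_top hab
  have := hMn
  have far (hC : ∀ K : Subgroup G, IsCoatom K → K ≠ M → K ⊓ M = centerOf M) :
      ¬(ncGraph G).Reachable x y := fun h =>
    hy (mem_of_ncGraph_reachable (fun K hK hKM => (hC K hK hKM).le) h hx hxZ).1
  have near (hC : ¬∀ K : Subgroup G, IsCoatom K → K ≠ M → K ⊓ M = centerOf M) :
      ∃ p : (ncGraph G).Walk x y, p.length ≤ 4 := by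
    push Not at hC
    obtain ⟨K, hK, hKM, hKZ⟩ := hC
    exact exists_walk_length_le_four hM hZ hx hxZ hy hK hKM hKZ
  refine ⟨⟨fun hxy => by_contra fun hC => hxy ((near hC).elim fun p _ => ⟨p⟩), far⟩, fun hxy => ?_⟩
  by_cases hC : ∀ K : Subgroup G, IsCoatom K → K ≠ M → K ⊓ M = centerOf M
  · exact absurd hxy (far hC)
  · obtain ⟨p, hp⟩ := near hC
    exact (SimpleGraph.dist_le p).trans hp

/-- Proposition 4.10(i),(ii) / `prop:xydist`. -/
theorem statement_17 (h2gen : ∃ a b : G, Subgroup.closure {a, b} = ⊤)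
    {M : Subgroup G} (hM : IsCoatom M) (hMn : M.Normal)
    (hMna : ∃ a ∈ M, ∃ b ∈ M, a * b ≠ b * a)
    (hZ : Subgroup.center G < centerOf M)
    {x y : G} (hx : x ∈ M) (hxZ : x ∉ centerOf M) (hy : y ∉ M) :
    (¬ (ncGraph G).Reachable x y ↔
        ∀ K : Subgroup G, IsCoatom K → K ≠ M → K ⊓ M = centerOf M) ∧
      ((ncGraph G).Reachable x y → (ncGraph G).dist x y ≤ 4) :=
  statement_17_general h2gen hM hMn hZ hx hxZ hy

end NC
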